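/- Let 0 ≤ i < k < j ≤ n and suppose g(i) − g(k) > 2F and g(j) − g(k) > 2F. Then splitting [i,j) at k, encoding [i,k) with E and [k,j) with B, saves strictly more than F bits over representing [i,j) as a single partition with either encoder: (F + E(i,k)) + (F + B(k,j)) + F < min(F + E(i,j), F + B(i,j)). -/
import Mathlib


/-- Cost in bits of encoding the elements in `[i,j)` with the point-wise encoder `E`. -/
def Ecost (e : ℕ → ℕ) (i j : ℕ) : ℤ := ∑ k ∈ Finset.Ico i j, (e k : ℤ)

/-- Cost in bits of encoding the elements in `[i,j)` with the bit-vector encoder `B`. -/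
def Bcost (b : ℕ → ℕ) (i j : ℕ) : ℤ := ∑ k ∈ Finset.Ico i j, (b k : ℤ)

/-- The gain function `g(i) = Σ_{k<i} (e(k) - b(k))`. -/
def gain (e b : ℕ → ℕ) (i : ℕ) : ℤ := ∑ k ∈ Finset.Ico 0 i, ((e k : ℤ) - (b k : ℤ))

lemma gain_sub (e b : ℕ → ℕ) {i k : ℕ} (h : i ≤ k) :
    gain e b k - gain e b i = Ecost e i k - Bcost b i k := by
  unfold gain Ecost Bcost
  rw [← Finset.sum_Ico_consecutive _ (Nat.zero_le i) h, Finset.sum_sub_distrib]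
  rw [Finset.sum_sub_distrib]
  ring

/-- if `g(i) - g(k) > 2F` and `g(j) - g(k) > 2F`, then splitting `[i,j)` at
`k` (encoding `[i,k)` with `E` and `[k,j)` with `B`) saves strictly more than `F` bits
over representing `[i,j)` as a single partition with either encoder. -/
theorem split_at_dominating_point_saves
    (n : ℕ) (e b : ℕ → ℕ) (F : ℤ) (hF : 0 < F)
    (i k j : ℕ) (hik : i < k) (hkj : k < j) (hj : j ≤ n)
    (h1 : gain e b i - gain e b k > 2 * F)
    (h2 : gain e b j - gain e b k > 2 * F) :
    (F + Ecost e i k) + (F + Bcost b k j) + F <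
      min (F + Ecost e i j) (F + Bcost b i j) := by
  have hik' := hik.le
  have hkj' := hkj.le
  have hE : Ecost e i j = Ecost e i k + Ecost e k j := by
    unfold Ecost; rw [← Finset.sum_Ico_consecutive _ hik' hkj']
  have hB : Bcost b i j = Bcost b i k + Bcost b k j := by
    unfold Bcost; rw [← Finset.sum_Ico_consecutive _ hik' hkj']
  have g1 := gain_sub e b hik'
  have g2 := gain_sub e b hkj'
  rw [lt_min_iff]
  constructor <;> linarith
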